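/- For every x ∈ (0,1] there exists a strictly increasing sequence of positive integers (n_i) such that lim_{i→∞} (−log_β |I_{n_i}(x)|)/n_i = 1 + τ(x); moreover any sequence (n_i) with lim_{i→∞} t_{n_i − k_{n_i}*(x)}/n_i = τ(x) has this property. -/

import Mathlib

/-!
`I_n(x)` is the interval `(x - T^n x / β^n, min_{j ≤ n} (x + (1 - T^j x) / β^j)]`. With
`k = k_n^*(x)` and `t = t_{n-k}`, the constraint of order `k` bounds its length by
`T^{n-k} 1 / β^n ≤ β^{-(n+t)}`, and comparing the digits of `x` with those of `1` shows that
every constraint leaves room `β^{-(n+t+1)}`. Hence `-log_β |I_n(x)| = n + t_{n-k_n^*} + O(1)`,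
which is the second claim; the first follows from a subsequence along which `t_{n-k_n^*}/n` tends
to its `limsup`.
-/

open MeasureTheory Filter Set

noncomputable section

/-- The β-transformation on `(0,1]`: `T_β x = βx − ⌈βx⌉ + 1`. -/
def Tbeta (β x : ℝ) : ℝ := β * x - ⌈β * x⌉ + 1

/-- The digits of the β-expansion, 0-indexed: `eps β x n` is the `(n+1)`-st digit
`ε_{n+1}(x,β) = ⌈β T_β^n x⌉ − 1`. -/
def eps (β x : ℝ) (n : ℕ) : ℤ := ⌈β * (Tbeta β)^[n] x⌉ - 1

/-- The basic interval of order `n` containing `x`: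
all `y ∈ (0,1]` whose first `n` digits agree with those of `x`. -/
def In (β x : ℝ) (n : ℕ) : Set ℝ := {y ∈ Ioc (0:ℝ) 1 | ∀ j < n, eps β y j = eps β x j}

/-- The length of a set (Lebesgue measure). -/
def len (s : Set ℝ) : ℝ := (volume s).toReal

/-- `tseq β n = t_n`: the maximal length of the block of zero digits of the
β-expansion of `1` immediately following position `n` (digits `ε*_{n+1},…,ε*_{n+k}`). -/
def tseq (β : ℝ) (n : ℕ) : ℕ := sSup {k : ℕ | ∀ j < k, eps β 1 (n + j) = 0}

/-- `Gam β n = Γ_n = max_{1 ≤ k ≤ n} t_k`. -/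
def Gam (β : ℝ) (n : ℕ) : ℕ := Finset.sup (Finset.Icc 1 n) (tseq β)

/-- `lam β = λ(β) = limsup_n Γ_n / n`. -/
def lam (β : ℝ) : ℝ := Filter.limsup (fun n : ℕ => (Gam β n : ℝ) / n) atTop

/-- `kstar β x n = k_n^*(x)`: the smallest `k ≥ 0` such that
`(ε_{k+1}(x),…,ε_n(x)) = (ε*_1,…,ε*_{n−k})`. -/
def kstar (β x : ℝ) (n : ℕ) : ℕ := sInf {k : ℕ | ∀ i < n - k, eps β x (k + i) = eps β 1 i}

/-- `tau β x = τ(x) = limsup_n t_{n − k_n^*(x)} / n`. -/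
def tau (β x : ℝ) : ℝ :=
  Filter.limsup (fun n : ℕ => (tseq β (n - kstar β x n) : ℝ) / n) atTop

/-- The upper density `\overline{D}(x) = limsup_n (−log_β |I_n(x)|)/n`. -/
def upperD (β x : ℝ) : ℝ :=
  Filter.limsup (fun n : ℕ => -Real.logb β (len (In β x n)) / n) atTop

/-- The lower density `\underline{D}(x) = liminf_n (−log_β |I_n(x)|)/n`. -/
def lowerD (β x : ℝ) : ℝ :=
  Filter.liminf (fun n : ℕ => -Real.logb β (len (In β x n)) / n) atTop

/-- The basic interval (cylinder) associated to a finite word `w` of digits: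
all `x ∈ (0,1]` whose β-expansion starts with `w`. -/
def cyl (β : ℝ) (w : List ℤ) : Set ℝ :=
  {x ∈ Ioc (0:ℝ) 1 | ∀ j < w.length, eps β x j = w.getD j 0}

/-- A finite word is admissible if it occurs as the initial digits of some `x ∈ (0,1]`. -/
def Admissible (β : ℝ) (w : List ℤ) : Prop := (cyl β w).Nonempty

/-- A basic interval is full if its length is `β^{−n}` where `n` is the order. -/
def IsFull (β : ℝ) (w : List ℤ) : Prop := len (cyl β w) = β ^ (-(w.length : ℤ))

/-- The word `(ε*_1,…,ε*_n)` of the first `n` digits of the β-expansion of `1`. -/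
def estarWord (β : ℝ) (n : ℕ) : List ℤ := (List.range n).map (eps β 1)

/-- The interior of a set relative to the subspace `[0,1]`
(for `S ⊆ [0,1]` this is exactly the interior of `S` in the topology of `[0,1]`). -/
def intIn01 (S : Set ℝ) : Set ℝ := Icc 0 1 \ closure (Icc 0 1 \ S)


open Topology

section Dynamics

variable {β y z : ℝ}

lemma Tbeta_mem_Ioc (β y : ℝ) : Tbeta β y ∈ Ioc (0 : ℝ) 1 := by
  have := Int.ceil_lt_add_one (β * y)
  have := Int.le_ceil (β * y)
  constructor <;> simp only [Tbeta] <;> linarith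

lemma iterate_Tbeta_mem_Ioc (hy : y ∈ Ioc (0 : ℝ) 1) :
    ∀ j, (Tbeta β)^[j] y ∈ Ioc (0 : ℝ) 1
  | 0 => hy
  | j + 1 => by rw [Function.iterate_succ_apply']; exact Tbeta_mem_Ioc β _

lemma iterate_Tbeta_succ (β y : ℝ) (i : ℕ) :
    (Tbeta β)^[i + 1] y = β * (Tbeta β)^[i] y - eps β y i := by
  rw [Function.iterate_succ_apply', Tbeta, eps]
  push_cast
  ring

lemma eps_iterate_Tbeta (β y : ℝ) (j i : ℕ) :
    eps β ((Tbeta β)^[j] y) i = eps β y (j + i) := by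
  rw [eps, eps, ← Function.iterate_add_apply, Nat.add_comm]

lemma eps_eq_iff (d : ℤ) (i : ℕ) :
    eps β y i = d ↔ β * (Tbeta β)^[i] y - d ∈ Ioc (0 : ℝ) 1 := by
  rw [eps, sub_eq_iff_eq_add, Int.ceil_eq_iff]
  push_cast
  constructor <;> rintro ⟨h₁, h₂⟩ <;> constructor <;> linarith

lemma eps_nonneg (hβ : 0 < β) (hy : y ∈ Ioc (0 : ℝ) 1) (i : ℕ) : 0 ≤ eps β y i := by
  have : (0 : ℤ) < ⌈β * (Tbeta β)^[i] y⌉ :=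
    Int.ceil_pos.mpr (mul_pos hβ (iterate_Tbeta_mem_Ioc hy i).1)
  rw [eps]
  omega

lemma one_lt_of_eps_ne_zero (hβ : 0 < β) (hy : y ∈ Ioc (0 : ℝ) 1) {i : ℕ}
    (h : eps β y i ≠ 0) : 1 < β * (Tbeta β)^[i] y := by
  by_contra! hle
  have hpos : 0 < β * (Tbeta β)^[i] y := mul_pos hβ (iterate_Tbeta_mem_Ioc hy i).1
  exact h ((eps_eq_iff 0 i).mpr (by simpa using ⟨hpos, hle⟩))

lemma iterate_Tbeta_sub_of_eps_eq {p : ℕ} (h : ∀ i < p, eps β y i = eps β z i) :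
    (Tbeta β)^[p] y - (Tbeta β)^[p] z = β ^ p * (y - z) := by
  induction p with
  | zero => simp
  | succ p ih =>
    have := ih fun i hi => h i (by omega)
    rw [iterate_Tbeta_succ, iterate_Tbeta_succ, h p p.lt_succ_self, pow_succ]
    linear_combination β * this

lemma iterate_Tbeta_add_of_eps_eq_zero {m k : ℕ} (h : ∀ j < k, eps β y (m + j) = 0) :
    (Tbeta β)^[m + k] y = β ^ k * (Tbeta β)^[m] y := by
  induction k with
  | zero => simp
  | succ k ih =>
    rw [← add_assoc, iterate_Tbeta_succ, h k k.lt_succ_self, ih fun j hj => h j (by omega),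
      pow_succ]
    push_cast
    ring

lemma bddAbove_zero_run (hβ : 1 < β) (hy : y ∈ Ioc (0 : ℝ) 1) (m : ℕ) :
    BddAbove {k : ℕ | ∀ j < k, eps β y (m + j) = 0} := by
  have hT := iterate_Tbeta_mem_Ioc (β := β) hy m
  obtain ⟨N, hN⟩ := pow_unbounded_of_one_lt ((Tbeta β)^[m] y)⁻¹ hβ
  refine ⟨N, fun k hk => ?_⟩
  have hle : β ^ k * (Tbeta β)^[m] y ≤ 1 :=
    iterate_Tbeta_add_of_eps_eq_zero hk ▸ (iterate_Tbeta_mem_Ioc hy (m + k)).2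
  have : β ^ k ≤ ((Tbeta β)^[m] y)⁻¹ := by simpa using (le_mul_inv_iff₀ hT.1).mpr hle
  exact ((pow_lt_pow_iff_right₀ hβ).mp (this.trans_lt hN)).le

lemma frequently_eps_ne_zero (hβ : 1 < β) (hy : y ∈ Ioc (0 : ℝ) 1) :
    ∃ᶠ n in atTop, eps β y n ≠ 0 := by
  rw [frequently_atTop]
  intro m
  obtain ⟨K, hK⟩ := bddAbove_zero_run hβ hy m
  by_contra! h
  have : K + 1 ≤ K := hK fun j _ => h (m + j) (by omega)
  omega

lemma iterate_Tbeta_le_iterate_one (hβ : 0 ≤ β) (hy : y ≤ 1) {p : ℕ}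
    (h : ∀ i < p, eps β y i = eps β 1 i) : (Tbeta β)^[p] y ≤ (Tbeta β)^[p] 1 := by
  have := iterate_Tbeta_sub_of_eps_eq h
  nlinarith [pow_nonneg hβ p]

lemma eps_le_eps_one (hβ : 0 ≤ β) (hy : y ≤ 1) {p : ℕ}
    (h : ∀ i < p, eps β y i = eps β 1 i) : eps β y p ≤ eps β 1 p := by
  have := mul_le_mul_of_nonneg_left (iterate_Tbeta_le_iterate_one hβ hy h) hβ
  simp only [eps]
  have := Int.ceil_le_ceil this
  omega

end Dynamics

section ExpansionOfOne

variable {β : ℝ}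

lemma tseq_spec (hβ : 1 < β) (m : ℕ) :
    (∀ j < tseq β m, eps β 1 (m + j) = 0) ∧ eps β 1 (m + tseq β m) ≠ 0 := by
  have hbdd := bddAbove_zero_run hβ (right_mem_Ioc.mpr one_pos) m
  have hmem : tseq β m ∈ {k : ℕ | ∀ j < k, eps β 1 (m + j) = 0} :=
    Nat.sSup_mem ⟨0, fun j hj => absurd hj j.not_lt_zero⟩ hbdd
  refine ⟨hmem, fun hzero => ?_⟩
  have : tseq β m + 1 ≤ tseq β m := le_csSup hbdd fun j hj => by
    rcases Nat.lt_or_ge j (tseq β m) with h | h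
    · exact hmem j h
    · rwa [show j = tseq β m by omega]
  omega

lemma iterate_one_le_inv_pow_tseq (hβ : 1 < β) (m : ℕ) :
    (Tbeta β)^[m] 1 ≤ (β ^ tseq β m)⁻¹ := by
  have h := iterate_Tbeta_add_of_eps_eq_zero (tseq_spec hβ m).1 ▸
    (iterate_Tbeta_mem_Ioc (β := β) (right_mem_Ioc.mpr one_pos) (m + tseq β m)).2
  rwa [← le_inv_mul_iff₀ (pow_pos (by linarith) _), mul_one] at h

lemma inv_pow_tseq_succ_lt_iterate_one (hβ : 1 < β) (m : ℕ) :
    (β ^ (tseq β m + 1))⁻¹ < (Tbeta β)^[m] 1 := by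
  have h := one_lt_of_eps_ne_zero (by linarith) (right_mem_Ioc.mpr one_pos) (tseq_spec hβ m).2
  rw [iterate_Tbeta_add_of_eps_eq_zero (tseq_spec hβ m).1, ← mul_assoc, ← pow_succ'] at h
  rwa [inv_lt_iff_one_lt_mul₀ (pow_pos (by linarith) _), mul_comm]

end ExpansionOfOne

section Cylinders

variable {β x y : ℝ} {n : ℕ}

lemma kstar_le (β x : ℝ) (n : ℕ) : kstar β x n ≤ n :=
  Nat.sInf_le fun i hi => by omega

lemma eps_kstar_add (β x : ℝ) (n : ℕ) :
    ∀ i < n - kstar β x n, eps β x (kstar β x n + i) = eps β 1 i :=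
  Nat.sInf_mem (s := {k | ∀ i < n - k, eps β x (k + i) = eps β 1 i})
    ⟨n, fun i hi => by omega⟩

lemma kstar_le_of_eps_eq {k : ℕ} (h : ∀ i < n - k, eps β x (k + i) = eps β 1 i) :
    kstar β x n ≤ k :=
  Nat.sInf_le h

lemma iterate_Tbeta_le_iterate_one_kstar (hβ : 0 ≤ β) (hx : x ∈ Ioc (0 : ℝ) 1) (n : ℕ) :
    (Tbeta β)^[n] x ≤ (Tbeta β)^[n - kstar β x n] 1 := by
  have h := iterate_Tbeta_le_iterate_one hβ (iterate_Tbeta_mem_Ioc hx (kstar β x n)).2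
    fun i hi => (eps_iterate_Tbeta β x _ i).trans (eps_kstar_add β x n i hi)
  rwa [← Function.iterate_add_apply, Nat.sub_add_cancel (kstar_le β x n)] at h

lemma iterate_one_kstar_le (hβ : 0 ≤ β) {j : ℕ} (hj : j ≤ n)
    (h : ∀ i < n - j, eps β x (j + i) = eps β 1 i) :
    (Tbeta β)^[n - kstar β x n] 1 ≤ (Tbeta β)^[n - j] 1 := by
  have hkj := kstar_le_of_eps_eq h
  have hle := iterate_Tbeta_le_iterate_one (p := n - j) hβ
    (iterate_Tbeta_mem_Ioc (right_mem_Ioc.mpr one_pos) (j - kstar β x n)).2 fun i hi => by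
      rw [eps_iterate_Tbeta, ← h i hi, ← eps_kstar_add β x n _ (by omega)]
      congr 1
      omega
  rwa [← Function.iterate_add_apply, show n - j + (j - kstar β x n) = n - kstar β x n by omega]
    at hle

/-- The condition `T_β^j y ∈ (0,1]` on the `j`-th iterate cuts out the interval
`(leftEnd β x j, rightEnd β x j]` around `x`. -/
def leftEnd (β x : ℝ) (j : ℕ) : ℝ := x - (Tbeta β)^[j] x / β ^ j

def rightEnd (β x : ℝ) (j : ℕ) : ℝ := x + (1 - (Tbeta β)^[j] x) / β ^ j

lemma mem_Ioc_leftEnd_rightEnd_iff (hβ : 0 < β) (j : ℕ) :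
    y ∈ Ioc (leftEnd β x j) (rightEnd β x j) ↔
      (Tbeta β)^[j] x + β ^ j * (y - x) ∈ Ioc (0 : ℝ) 1 := by
  have hb := pow_pos hβ j
  simp only [mem_Ioc, leftEnd, rightEnd, sub_lt_comm, ← sub_le_iff_le_add', lt_div_iff₀ hb,
    le_div_iff₀ hb]
  constructor <;> rintro ⟨h₁, h₂⟩ <;> constructor <;> linarith

lemma mem_In_iff (hβ : 0 < β) :
    y ∈ In β x n ↔ ∀ j ≤ n, y ∈ Ioc (leftEnd β x j) (rightEnd β x j) := by
  simp only [mem_Ioc_leftEnd_rightEnd_iff hβ]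
  constructor
  · rintro ⟨hy, hd⟩ j hj
    have := iterate_Tbeta_sub_of_eps_eq fun i (hi : i < j) => hd i (by omega)
    rw [show (Tbeta β)^[j] x + β ^ j * (y - x) = (Tbeta β)^[j] y by linarith]
    exact iterate_Tbeta_mem_Ioc hy j
  · intro h
    refine ⟨by simpa using h 0 n.zero_le, fun i hi => ?_⟩
    induction i using Nat.strong_induction_on with
    | _ i ih =>
      have hsub := iterate_Tbeta_sub_of_eps_eq fun i' (hi' : i' < i) => ih i' hi' (by omega)
      refine (eps_eq_iff _ i).mpr ?_
      convert h (i + 1) hi using 1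
      rw [iterate_Tbeta_succ, pow_succ]
      linear_combination β * hsub

lemma leftEnd_mono (hβ : 0 < β) (hx : x ∈ Ioc (0 : ℝ) 1) : Monotone (leftEnd β x) := by
  refine monotone_nat_of_le_succ fun j => ?_
  have hd : (0 : ℝ) ≤ eps β x j := by exact_mod_cast eps_nonneg hβ hx j
  have hb := pow_pos hβ j
  rw [leftEnd, leftEnd, iterate_Tbeta_succ, pow_succ, sub_le_sub_iff_left,
    div_le_div_iff₀ (mul_pos hb hβ) hb]
  nlinarith

lemma In_subset_Ioc (hβ : 0 < β) {j : ℕ} (hj : j ≤ n) :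
    In β x n ⊆ Ioc (leftEnd β x n) (rightEnd β x j) :=
  fun _ hy => ⟨((mem_In_iff hβ).mp hy n le_rfl).1, ((mem_In_iff hβ).mp hy j hj).2⟩

lemma Ioc_subset_In (hβ : 0 < β) (hx : x ∈ Ioc (0 : ℝ) 1) {c : ℝ}
    (hc : ∀ j ≤ n, c ≤ rightEnd β x j) : Ioc (leftEnd β x n) c ⊆ In β x n :=
  fun _ hy => (mem_In_iff hβ).mpr fun j hj =>
    ⟨(leftEnd_mono hβ hx hj).trans_lt hy.1, hy.2.trans (hc j hj)⟩

lemma rightEnd_eq_of_eps_eq (hβ : 0 < β) {j : ℕ} (hj : j ≤ n)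
    (h : ∀ i < n - j, eps β x (j + i) = eps β 1 i) :
    rightEnd β x j = leftEnd β x n + (Tbeta β)^[n - j] 1 / β ^ n := by
  have hsub := iterate_Tbeta_sub_of_eps_eq fun i hi => (eps_iterate_Tbeta β x j i).trans (h i hi)
  rw [← Function.iterate_add_apply, Nat.sub_add_cancel hj] at hsub
  have hn : β ^ n = β ^ (n - j) * β ^ j := by rw [← pow_add, Nat.sub_add_cancel hj]
  rw [rightEnd, leftEnd, hn]
  field_simp
  linear_combination hsub

lemma rightEnd_le_of_eps_lt (hβ : 0 < β) (hx : x ∈ Ioc (0 : ℝ) 1) {j q : ℕ}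
    (h : ∀ i < q, eps β x (j + i) = eps β 1 i) (hlt : eps β x (j + q) < eps β 1 q) :
    rightEnd β x (j + q + 1) ≤ rightEnd β x j := by
  set y := (Tbeta β)^[j] x
  have hy : y ∈ Ioc (0 : ℝ) 1 := iterate_Tbeta_mem_Ioc hx j
  have hsub := iterate_Tbeta_sub_of_eps_eq fun i hi => (eps_iterate_Tbeta β x j i).trans (h i hi)
  have hlt' : (eps β y q : ℝ) + 1 ≤ eps β 1 q := by
    rw [eps_iterate_Tbeta]; exact_mod_cast hlt
  have h1 := (iterate_Tbeta_mem_Ioc (β := β) (right_mem_Ioc.mpr one_pos) (q + 1)).1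
  rw [iterate_Tbeta_succ] at h1
  have hkey : 1 - (Tbeta β)^[q + 1] y ≤ β ^ (q + 1) * (1 - y) := by
    rw [iterate_Tbeta_succ, pow_succ]
    nlinarith
  have hxy : (Tbeta β)^[j + q + 1] x = (Tbeta β)^[q + 1] y := by
    rw [← Function.iterate_add_apply]; congr 1; omega
  rw [rightEnd, rightEnd, hxy, add_le_add_iff_left, add_assoc, pow_add, mul_comm, ← div_div]
  gcongr
  rwa [div_le_iff₀ (pow_pos hβ _), mul_comm]

/-- Either the digits of `x` follow those of `1` from `j` all the way to `n`, and the room is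
`T^{n-j} 1 / β^n ≥ T^{n-k_n^*} 1 / β^n`, or they drop below at some point, and a later
constraint is stronger. -/
lemma leftEnd_add_le_rightEnd (hβ : 1 < β) (hx : x ∈ Ioc (0 : ℝ) 1) :
    ∀ j ≤ n,
      leftEnd β x n + (β ^ (n + tseq β (n - kstar β x n) + 1))⁻¹ ≤ rightEnd β x j := by
  have hβ0 : 0 < β := by linarith
  intro j hj
  induction hd : n - j using Nat.strong_induction_on generalizing j with
  | _ d ih =>
    by_cases hmatch : ∀ i < n - j, eps β x (j + i) = eps β 1 i
    · rw [rightEnd_eq_of_eps_eq hβ0 hj hmatch, add_le_add_iff_left, add_assoc, pow_add,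
        mul_inv, mul_comm, ← div_eq_mul_inv]
      gcongr
      exact (inv_pow_tseq_succ_lt_iterate_one hβ _).le.trans
        (iterate_one_kstar_le hβ0.le hj hmatch)
    · classical
      have hex : ∃ q, q < n - j ∧ eps β x (j + q) ≠ eps β 1 q := by simpa using hmatch
      obtain ⟨hq, hne⟩ := Nat.find_spec hex
      have hprefix : ∀ i < Nat.find hex, eps β x (j + i) = eps β 1 i := fun i hi => by
        by_contra h
        exact Nat.find_min hex hi ⟨by omega, h⟩
      have hle := eps_le_eps_one hβ0.le (iterate_Tbeta_mem_Ioc hx j).2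
        fun i hi => (eps_iterate_Tbeta β x j i).trans (hprefix i hi)
      rw [eps_iterate_Tbeta] at hle
      exact (ih _ (by omega) (j + Nat.find hex + 1) (by omega) rfl).trans
        (rightEnd_le_of_eps_lt hβ0 hx hprefix (hle.lt_of_ne hne))

end Cylinders

section Lengths

variable {β x : ℝ}

lemma len_Ioc_of_le {a b : ℝ} (hab : a ≤ b) : len (Ioc a b) = b - a :=
  Real.volume_real_Ioc_of_le hab

lemma len_In_le (hβ : 1 < β) (n : ℕ) :
    len (In β x n) ≤ (β ^ (n + tseq β (n - kstar β x n)))⁻¹ := by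
  have hβ0 : 0 < β := by linarith
  have hR := rightEnd_eq_of_eps_eq hβ0 (kstar_le β x n) (eps_kstar_add β x n)
  have hroom : (Tbeta β)^[n - kstar β x n] 1 / β ^ n ≤
      (β ^ (n + tseq β (n - kstar β x n)))⁻¹ := by
    rw [pow_add, mul_inv, mul_comm, ← div_eq_mul_inv]
    gcongr
    exact iterate_one_le_inv_pow_tseq hβ _
  have hroom_pos : 0 < (Tbeta β)^[n - kstar β x n] 1 / β ^ n :=
    div_pos (iterate_Tbeta_mem_Ioc (right_mem_Ioc.mpr one_pos) _).1 (pow_pos hβ0 n)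
  calc len (In β x n) ≤ len (Ioc (leftEnd β x n) (rightEnd β x (kstar β x n))) :=
        measureReal_mono (In_subset_Ioc hβ0 (kstar_le β x n)) measure_Ioc_lt_top.ne
    _ ≤ _ := by
        rw [len_Ioc_of_le (by rw [hR]; linarith), hR]
        linarith

lemma inv_pow_le_len_In (hβ : 1 < β) (hx : x ∈ Ioc (0 : ℝ) 1) (n : ℕ) :
    (β ^ (n + tseq β (n - kstar β x n) + 1))⁻¹ ≤ len (In β x n) := by
  have hβ0 : 0 < β := by linarith
  have hfin : volume (In β x n) ≠ ⊤ :=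
    ne_top_of_le_ne_top (by simp) (measure_mono fun _ hy => hy.1 : _ ≤ volume (Ioc (0 : ℝ) 1))
  set δ := (β ^ (n + tseq β (n - kstar β x n) + 1))⁻¹
  calc δ = len (Ioc (leftEnd β x n) (leftEnd β x n + δ)) := by
        rw [len_Ioc_of_le (by simp [δ]; positivity)]; ring
    _ ≤ len (In β x n) :=
        measureReal_mono (Ioc_subset_In hβ0 hx (leftEnd_add_le_rightEnd hβ hx)) hfin

lemma logb_inv_pow (hβ : 1 < β) (s : ℕ) : Real.logb β (β ^ s)⁻¹ = -s := by
  rw [Real.logb_inv, Real.logb_pow, Real.logb_self_eq_one hβ, mul_one]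

lemma neg_logb_len_In_mem_Icc (hβ : 1 < β) (hx : x ∈ Ioc (0 : ℝ) 1) (n : ℕ) :
    -Real.logb β (len (In β x n)) ∈
      Icc ((n : ℝ) + tseq β (n - kstar β x n)) (n + tseq β (n - kstar β x n) + 1) := by
  have hlo := inv_pow_le_len_In hβ hx n
  have hpos := (inv_pos.mpr (pow_pos (by linarith) _)).trans_le hlo
  have h₁ := Real.logb_le_logb_of_le hβ hpos (len_In_le hβ n)
  have h₂ := Real.logb_le_logb_of_le hβ (inv_pos.mpr (pow_pos (by linarith) _)) hlo
  rw [logb_inv_pow hβ] at h₁ h₂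
  push_cast at h₁ h₂
  constructor <;> linarith

/-- A nonzero digit `ε_{n+1}(x)` means `T^n x > 1/β`, while
`T^n x ≤ T^{n-k_n^*} 1 ≤ β^{-t}`. -/
lemma tseq_eq_zero_of_eps_ne_zero (hβ : 1 < β) (hx : x ∈ Ioc (0 : ℝ) 1) {n : ℕ}
    (h : eps β x n ≠ 0) : tseq β (n - kstar β x n) = 0 := by
  have hβ0 : 0 < β := by linarith
  have h₁ := one_lt_of_eps_ne_zero hβ0 hx h
  have h₂ := iterate_Tbeta_le_iterate_one_kstar hβ0.le hx n
  have h₃ := iterate_one_le_inv_pow_tseq hβ (n - kstar β x n)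
  by_contra ht
  have h₄ : β * (β ^ tseq β (n - kstar β x n))⁻¹ ≤ 1 := by
    rw [← div_eq_mul_inv, div_le_one (pow_pos hβ0 _)]
    exact le_self_pow₀ hβ.le ht
  nlinarith

end Lengths

lemma tendsto_div_of_le_of_le_add_one {ι : Type*} {l : Filter ι} {a u v : ι → ℝ} {c : ℝ}
    (ha : Tendsto a l atTop) (hlo : ∀ i, v i ≤ u i) (hhi : ∀ i, u i ≤ v i + 1)
    (hv : Tendsto (fun i => v i / a i) l (𝓝 c)) : Tendsto (fun i => u i / a i) l (𝓝 c) := by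
  have hup : Tendsto (fun i => v i / a i + (a i)⁻¹) l (𝓝 c) := by
    simpa using hv.add ha.inv_tendsto_atTop
  refine tendsto_of_tendsto_of_tendsto_of_le_of_le' hv hup ?_ ?_ <;>
    filter_upwards [ha.eventually_gt_atTop 0] with i hi
  · exact div_le_div_of_nonneg_right (hlo i) hi.le
  · rw [← one_div, ← add_div]
    exact div_le_div_of_nonneg_right (hhi i) hi.le

section Densities

variable {β x : ℝ}

lemma tendsto_neg_logb_len_In_div (hβ : 1 < β) (hx : x ∈ Ioc (0 : ℝ) 1) {τ : ℝ}
    {nk : ℕ → ℕ} (hmono : StrictMono nk) (hpos : ∀ i, 0 < nk i)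
    (h : Tendsto (fun i => (tseq β (nk i - kstar β x (nk i)) : ℝ) / nk i) atTop (𝓝 τ)) :
    Tendsto (fun i => -Real.logb β (len (In β x (nk i))) / nk i) atTop (𝓝 (1 + τ)) := by
  refine tendsto_div_of_le_of_le_add_one (v := fun i => nk i + tseq β (nk i - kstar β x (nk i)))
    (tendsto_natCast_atTop_atTop.comp hmono.tendsto_atTop)
    (fun i => (neg_logb_len_In_mem_Icc hβ hx (nk i)).1)
    (fun i => (neg_logb_len_In_mem_Icc hβ hx (nk i)).2) ?_
  refine (tendsto_const_nhds.add h).congr fun i => ?_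
  rw [add_div, div_self (Nat.cast_pos.mpr (hpos i)).ne']

lemma exists_strictMono_tendsto_tau (hβ : 1 < β) (hx : x ∈ Ioc (0 : ℝ) 1) :
    ∃ nk : ℕ → ℕ, StrictMono nk ∧ (∀ i, 0 < nk i) ∧
      Tendsto (fun i => (tseq β (nk i - kstar β x (nk i)) : ℝ) / nk i) atTop
        (𝓝 (tau β x)) := by
  set u : ℕ → ℝ := fun n => (tseq β (n - kstar β x n) : ℝ) / n
  by_cases hb : IsBoundedUnder (· ≤ ·) atTop u
  · have hc : IsCoboundedUnder (· ≤ ·) atTop u :=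
      (isBoundedUnder_of ⟨0, fun n => by positivity⟩).isCoboundedUnder_le
    obtain ⟨φ, hφ, hlim⟩ := (isGreatest_mapClusterPt_limsup hc hb).1.tendsto_subseq
    exact ⟨fun i => φ (i + 1), fun a b hab => hφ (by omega),
      fun i => (Nat.zero_le _).trans_lt (hφ i.succ_pos), hlim.comp (tendsto_add_atTop_nat 1)⟩
  -- An unbounded `limsup` in `ℝ` takes the junk value `0`, attained along nonzero digits.
  · obtain ⟨φ, hφ, hspec⟩ := extraction_of_frequently_atTop
      ((frequently_eps_ne_zero hβ hx).and_eventually (eventually_gt_atTop 0))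
    refine ⟨φ, hφ, fun i => (hspec i).2, ?_⟩
    rw [show tau β x = limsup u atTop from rfl, Real.limsup_of_not_isBoundedUnder hb]
    simp [tseq_eq_zero_of_eps_ne_zero hβ hx (hspec _).1]

end Densities

/-- For every `x ∈ (0,1]` there is a strictly increasing sequence of
positive integers `(n_i)` with `lim_i (−log_β |I_{n_i}(x)|)/n_i = 1 + τ(x)`; moreover,
any strictly increasing sequence `(n_i)` with `lim_i t_{n_i − k_{n_i}^*(x)}/n_i = τ(x)`
has this property. -/
theorem exists_subsequence_upperD (β : ℝ) (hβ : 1 < β) (x : ℝ) (hx : x ∈ Ioc (0:ℝ) 1) :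
    (∃ nk : ℕ → ℕ, StrictMono nk ∧ (∀ i, 0 < nk i) ∧
        Tendsto (fun i => -Real.logb β (len (In β x (nk i))) / (nk i : ℝ)) atTop
          (nhds (1 + tau β x))) ∧
      ∀ nk : ℕ → ℕ, StrictMono nk → (∀ i, 0 < nk i) →
        Tendsto (fun i => (tseq β (nk i - kstar β x (nk i)) : ℝ) / (nk i : ℝ)) atTop
          (nhds (tau β x)) →
        Tendsto (fun i => -Real.logb β (len (In β x (nk i))) / (nk i : ℝ)) atTop
          (nhds (1 + tau β x)) := by
  obtain ⟨nk, hmono, hpos, htau⟩ := exists_strictMono_tendsto_tau hβ hx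
  exact ⟨⟨nk, hmono, hpos, tendsto_neg_logb_len_In_div hβ hx hmono hpos htau⟩,
    fun _ hmono hpos => tendsto_neg_logb_len_In_div hβ hx hmono hpos⟩
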